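/- arXiv:2307.09854 — 7 statements merged into one kernel-verified Lean document; each statement's English description precedes it below -/
import Mathlib

section
/- Let q ≥ 2 be a prime power and p ≥ 1 a real number, and put d = C(4q−1, 2). Then there exists a finite set S in ℓ_p^d of positive diameter such that S cannot be partitioned into fewer than C(4q−1, 2q−1)/C(4q−1, q−1) parts each of diameter strictly smaller than the diameter of S. -/
open Polynomial in
lemma bk_key_choose (p : ℕ) (hp : p.Prime) (s m b : ℕ) (hb : b < p ^ s) :
    (((p ^ s + m).choose b : ZMod p)) = (m.choose b : ZMod p) := by
  haveI : Fact p.Prime := ⟨hp⟩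
  have h1 : ((X + 1 : Polynomial (ZMod p)) ^ (p ^ s + m))
      = (X ^ (p ^ s) + 1) * (X + 1) ^ m := by
    rw [pow_add, add_pow_char_pow, one_pow]
  have h2 := congrArg (fun f : Polynomial (ZMod p) => f.coeff b) h1
  simp only [coeff_X_add_one_pow] at h2
  rw [h2, add_mul, one_mul, Polynomial.coeff_add, coeff_X_add_one_pow]
  rw [Polynomial.X_pow_mul, Polynomial.coeff_mul_X_pow']
  simp [Nat.not_le.mpr hb]

lemma bk_choose_off (p s Q : ℕ) (hp : p.Prime) (hQ : Q = p ^ s) (hQ2 : 2 ≤ Q)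
    (t : ℕ) (ht : t ≤ 2 * Q - 2) (hne : t ≠ Q - 1) :
    ((t.choose (Q - 1) : ZMod p)) = 0 := by
  rcases lt_or_gt_of_ne hne with h | h
  · rw [Nat.choose_eq_zero_of_lt h, Nat.cast_zero]
  · have htQ : Q ≤ t := by omega
    have hm : t = p ^ s + (t - Q) := by omega
    rw [hm, bk_key_choose p hp s _ _ (by omega)]
    rw [Nat.choose_eq_zero_of_lt (by omega), Nat.cast_zero]

lemma bk_choose_diag (p s Q : ℕ) (hp : p.Prime) (hQ : Q = p ^ s) (hQ2 : 2 ≤ Q) :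
    (((2 * Q - 1).choose (Q - 1) : ZMod p)) = 1 := by
  have hm : 2 * Q - 1 = p ^ s + (Q - 1) := by omega
  rw [hm, bk_key_choose p hp s _ _ (by omega), Nat.choose_self, Nat.cast_one]

lemma bk_sum_ind {n k : ℕ} {K : Type*} [Semiring K] (A : Finset (Fin n)) :
    ∑ T : {T : Finset (Fin n) // T.card = k}, (if (T : Finset (Fin n)) ⊆ A then (1:K) else 0)
      = (A.card.choose k : K) := by
  classical
  rw [Finset.sum_boole]
  congr 1
  rw [← Finset.card_powersetCard k A]
  refine Finset.card_bij (fun T _ => (T : Finset (Fin n))) ?_ ?_ ?_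
  · intro T hT
    simp only [Finset.mem_filter] at hT
    exact Finset.mem_powersetCard.2 ⟨hT.2, T.2⟩
  · intro a _ b _ hab
    exact Subtype.ext hab
  · intro T hT
    rw [Finset.mem_powersetCard] at hT
    exact ⟨⟨T, hT.2⟩, by simp [hT.1], rfl⟩

/-- The Frankl–Wilson forbidden-intersection theorem in the special case needed for
Borsuk's problem: for a prime power `Q`, a family of `(2Q-1)`-subsets of an `n`-set
with no pairwise intersection of size exactly `Q-1` has at most `C(n, Q-1)` members. -/
lemma bk_FW (p s Q : ℕ) (hp : p.Prime) (hQ : Q = p ^ s) (hQ2 : 2 ≤ Q)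
    (n : ℕ) (F : Finset (Finset (Fin n)))
    (hcard : ∀ A ∈ F, A.card = 2 * Q - 1)
    (hint : ∀ A ∈ F, ∀ B ∈ F, A ≠ B → (A ∩ B).card ≠ Q - 1) :
    F.card ≤ n.choose (Q - 1) := by
  classical
  haveI : Fact p.Prime := ⟨hp⟩
  set K := ZMod p
  set w : Finset (Fin n) → ({T : Finset (Fin n) // T.card = Q - 1} → K) :=
    fun A => fun T => if (T : Finset (Fin n)) ⊆ A then 1 else 0 with hw
  have hgram : ∀ A B : Finset (Fin n),
      ∑ T, w A T * w B T = (((A ∩ B).card.choose (Q - 1) : K)) := by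
    intro A B
    rw [← bk_sum_ind (A ∩ B)]
    apply Finset.sum_congr rfl
    intro T _
    simp only [hw]
    by_cases h1 : (T : Finset (Fin n)) ⊆ A <;> by_cases h2 : (T : Finset (Fin n)) ⊆ B <;>
      simp [h1, h2, Finset.subset_inter_iff]
  have hgram' : ∀ A ∈ F, ∀ B ∈ F,
      ∑ T, w A T * w B T = if A = B then 1 else 0 := by
    intro A hA B hB
    rw [hgram]
    by_cases hAB : A = B
    · subst hAB
      rw [if_pos rfl, Finset.inter_self, hcard A hA]
      exact bk_choose_diag p s Q hp hQ hQ2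
    · rw [if_neg hAB]
      have hlt : (A ∩ B).card ≤ 2 * Q - 2 := by
        have hsub : A ∩ B ⊆ A := Finset.inter_subset_left
        have hle := Finset.card_le_card hsub
        have hne2 : (A ∩ B).card ≠ A.card := by
          intro hcc
          have hABeq : A ∩ B = A := Finset.eq_of_subset_of_card_le hsub (le_of_eq hcc.symm)
          have hBA : A ⊆ B := by
            intro x hx
            rw [← hABeq] at hx
            exact (Finset.mem_inter.1 hx).2
          exact hAB (Finset.eq_of_subset_of_card_le hBA
            (le_of_eq ((hcard B hB).trans (hcard A hA).symm)))
        rw [hcard A hA] at hle hne2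
        omega
      exact bk_choose_off p s Q hp hQ hQ2 _ hlt (hint A hA B hB hAB)
  have hli : LinearIndependent K (fun A : {A // A ∈ F} => w (A : Finset (Fin n))) := by
    rw [Fintype.linearIndependent_iff]
    intro g hg A
    have := congrArg (fun v => ∑ T, v T * w (A : Finset (Fin n)) T) hg
    simp only [Finset.sum_apply, Pi.smul_apply, smul_eq_mul, Pi.zero_apply, zero_mul,
      Finset.sum_const_zero] at this
    simp_rw [Finset.sum_mul (R := K)] at this
    rw [Finset.sum_comm] at this
    simp_rw [mul_assoc, ← Finset.mul_sum] at this
    have hrw : ∀ B' : {A // A ∈ F}, g B' * ∑ T, w (B' : Finset (Fin n)) T * w (A : Finset (Fin n)) T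
        = if B' = A then g B' else 0 := by
      intro B'
      rw [hgram' _ B'.2 _ A.2]
      by_cases h : (B' : Finset (Fin n)) = (A : Finset (Fin n))
      · rw [if_pos h, if_pos (Subtype.ext h), mul_one]
      · rw [if_neg h, if_neg (fun hc => h (congrArg _ hc)), mul_zero]
    simp_rw [hrw] at this
    simpa using this
  have hcardle := hli.fintype_card_le_finrank
  rw [Module.finrank_fintype_fun_eq_card, Fintype.card_finset_len, Fintype.card_fin] at hcardle
  rwa [Fintype.card_coe] at hcardle

noncomputable def bkChi (n : ℕ) (F : Finset (Fin n)) (i : Fin n) : ℝ :=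
  if i ∈ F then 1 else -1

lemma bk_term (pR : ℝ) (hpR : 0 < pR) {n : ℕ} (F G s : Finset (Fin n)) (hs : s.card = 2) :
    |∏ i ∈ s, bkChi n F i - ∏ i ∈ s, bkChi n G i| ^ pR
      = if (s ∩ (symmDiff F G)).card = 1 then (2:ℝ) ^ pR else 0 := by
  classical
  obtain ⟨i, j, hij, rfl⟩ := Finset.card_eq_two.1 hs
  rw [Finset.prod_pair hij, Finset.prod_pair hij]
  have hcard : (({i, j} : Finset (Fin n)) ∩ (symmDiff F G)).card
      = (if i ∈ symmDiff F G then 1 else 0) + (if j ∈ symmDiff F G then 1 else 0) := by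
    rw [← Finset.filter_mem_eq_inter]
    rw [Finset.filter_insert, Finset.filter_singleton]
    by_cases h1 : i ∈ symmDiff F G <;> by_cases h2 : j ∈ symmDiff F G <;>
      simp [h1, h2, Finset.card_insert_of_notMem, hij]
  rw [hcard]
  by_cases hiF : i ∈ F <;> by_cases hiG : i ∈ G <;> by_cases hjF : j ∈ F <;>
    by_cases hjG : j ∈ G <;>
    simp only [bkChi, Finset.mem_symmDiff, hiF, hiG, hjF, hjG, if_true, if_false,
      not_true, not_false_iff, true_and, false_and, and_true, and_false, or_false,
      false_or, true_or, or_true] <;>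
    norm_num [Real.zero_rpow (ne_of_gt hpR)]

lemma bk_count {n : ℕ} (Δ : Finset (Fin n)) :
    ((Finset.univ.powersetCard 2).filter
        (fun s : Finset (Fin n) => (s ∩ Δ).card = 1)).card
      = Δ.card * (n - Δ.card) := by
  classical
  have hcc : Δᶜ.card = n - Δ.card := by rw [Finset.card_compl, Fintype.card_fin]
  rw [← hcc, ← Finset.card_product]
  apply (Finset.card_bij (fun (ab : Fin n × Fin n) _ => ({ab.1, ab.2} : Finset (Fin n))) ?_ ?_ ?_).symm
  · rintro ⟨a, b⟩ hab
    simp only [Finset.mem_product, Finset.mem_compl] at hab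
    obtain ⟨ha, hb⟩ := hab
    have hne : a ≠ b := fun h => hb (h ▸ ha)
    refine Finset.mem_filter.2 ⟨Finset.mem_powersetCard_univ.2 (Finset.card_pair hne), ?_⟩
    have : ({a, b} : Finset (Fin n)) ∩ Δ = {a} := by
      ext x
      simp only [Finset.mem_inter, Finset.mem_insert, Finset.mem_singleton]
      constructor
      · rintro ⟨hx1 | hx2, hxΔ⟩
        · exact hx1
        · exact absurd (hx2 ▸ hxΔ) hb
      · rintro rfl; exact ⟨Or.inl rfl, ha⟩
    rw [this, Finset.card_singleton]
  · rintro ⟨a, b⟩ hab ⟨a', b'⟩ hab' h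
    simp only [Finset.mem_product, Finset.mem_compl] at hab hab'
    have h' : ({a, b} : Finset (Fin n)) = {a', b'} := h
    have ha : a ∈ ({a', b'} : Finset (Fin n)) := h' ▸ Finset.mem_insert_self a {b}
    have hb : b ∈ ({a', b'} : Finset (Fin n)) := h' ▸ Finset.mem_insert_of_mem (Finset.mem_singleton_self b)
    simp only [Finset.mem_insert, Finset.mem_singleton] at ha hb
    have haa : a = a' := by
      rcases ha with h1 | h1
      · exact h1
      · exact absurd (h1 ▸ hab.1) hab'.2
    have hbb : b = b' := by
      rcases hb with h1 | h1
      · exact absurd (h1 ▸ hab.2) (by simpa using hab'.1)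
      · exact h1
    simp [haa, hbb]
  · intro s hsmem
    rw [Finset.mem_filter, Finset.mem_powersetCard_univ] at hsmem
    obtain ⟨hs2, hs1⟩ := hsmem
    obtain ⟨a, ha⟩ := Finset.card_eq_one.1 hs1
    have hsd : (s \ Δ).card = 1 := by
      have := Finset.card_sdiff_add_card_inter s Δ
      omega
    obtain ⟨b, hb⟩ := Finset.card_eq_one.1 hsd
    have haΔ : a ∈ s ∩ Δ := ha ▸ Finset.mem_singleton_self a
    have hbΔ : b ∈ s \ Δ := hb ▸ Finset.mem_singleton_self b
    rw [Finset.mem_inter] at haΔ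
    rw [Finset.mem_sdiff] at hbΔ
    refine ⟨(a, b), Finset.mem_product.2 ⟨haΔ.2, Finset.mem_compl.2 hbΔ.2⟩, ?_⟩
    show ({a, b} : Finset (Fin n)) = s
    have hsub : ({a, b} : Finset (Fin n)) ⊆ s := by
      intro x hx
      simp only [Finset.mem_insert, Finset.mem_singleton] at hx
      rcases hx with rfl | rfl
      · exact haΔ.1
      · exact hbΔ.1
    have hne : a ≠ b := fun h => hbΔ.2 (h ▸ haΔ.2)
    exact Finset.eq_of_subset_of_card_le hsub
      (by rw [hs2, Finset.card_pair hne])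

lemma bk_card_Ico (n a b : ℕ) (hb : b ≤ n) :
    (Finset.univ.filter (fun i : Fin n => a ≤ i.val ∧ i.val < b)).card = b - a := by
  rw [← Nat.card_Ico a b]
  refine Finset.card_bij (fun i _ => i.val) ?_ ?_ ?_
  · intro i hi
    rw [Finset.mem_filter] at hi
    exact Finset.mem_Ico.2 hi.2
  · intro i _ j _ h
    exact Fin.val_injective h
  · intro x hx
    rw [Finset.mem_Ico] at hx
    exact ⟨⟨x, lt_of_lt_of_le hx.2 hb⟩, by simp [hx.1, hx.2], rfl⟩

lemma bk_quad (q : ℕ) (hq2 : 2 ≤ q) (D : ℕ) (hD : Even D) (hDle : D ≤ 4*q-2)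
    (hne : D ≠ 2*q) : D * (4*q-1 - D) < 2*q*(2*q-1) := by
  obtain ⟨c, rfl⟩ := hD
  have h1 : c ≤ 2*q - 1 := by omega
  have h2 : c ≠ q := by omega
  zify [show c + c ≤ 4*q - 1 by omega, show 1 ≤ 2*q by omega, show 1 ≤ 4*q by omega]
  rcases lt_or_gt_of_ne h2 with h | h
  · have hy : (c : ℤ) < q := by exact_mod_cast h
    have f1 : (0:ℤ) < 2*q - 2*c := by linarith
    have f2 : (0:ℤ) < 2*q - 2*c - 1 := by linarith
    nlinarith [mul_pos f1 f2]
  · have hy : (q : ℤ) < c := by exact_mod_cast h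
    have f1 : (0:ℤ) < 2*c - 2*q := by linarith
    have f2 : (0:ℤ) < 2*c - 2*q + 1 := by linarith
    nlinarith [mul_pos f1 f2]

lemma bk_card_symmDiff {α : Type*} [DecidableEq α] (F G : Finset α) :
    (symmDiff F G).card + 2 * (F ∩ G).card = F.card + G.card := by
  rw [symmDiff_def, Finset.sup_eq_union,
    Finset.card_union_of_disjoint disjoint_sdiff_sdiff]
  have h1 := Finset.card_sdiff_add_card_inter F G
  have h2 := Finset.card_sdiff_add_card_inter G F
  rw [Finset.inter_comm G F] at h2
  omega

noncomputable def bkVec (p : ENNReal) {n d : ℕ}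
    (e : {s : Finset (Fin n) // s.card = 2} ≃ Fin d)
    (F : Finset (Fin n)) : PiLp p (fun _ : Fin d => ℝ) :=
  (WithLp.equiv p _).symm (fun a => ∏ i ∈ (e.symm a : Finset (Fin n)), bkChi n F i)

lemma bk_dist (p : ℝ) (hp : 1 ≤ p) [Fact (1 ≤ ENNReal.ofReal p)] {n d : ℕ}
    (e : {s : Finset (Fin n) // s.card = 2} ≃ Fin d) (F G : Finset (Fin n)) :
    dist (bkVec (ENNReal.ofReal p) e F) (bkVec (ENNReal.ofReal p) e G)
      = ((((Finset.univ.powersetCard 2).filter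
          (fun s : Finset (Fin n) => (s ∩ symmDiff F G).card = 1)).card : ℝ) * (2:ℝ)^p) ^ (1/p) := by
  classical
  have hp0 : 0 < p := lt_of_lt_of_le one_pos hp
  have htr : (ENNReal.ofReal p).toReal = p := ENNReal.toReal_ofReal hp0.le
  rw [PiLp.dist_eq_sum (by rw [htr]; exact hp0)]
  rw [htr]
  congr 1
  rw [← Equiv.sum_comp e (fun a => dist (bkVec (ENNReal.ofReal p) e F a)
      (bkVec (ENNReal.ofReal p) e G a) ^ p)]
  simp only [bkVec, WithLp.equiv_symm_apply, PiLp.toLp_apply, Equiv.symm_apply_apply, Real.dist_eq]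
  have hterm : ∀ T : {s : Finset (Fin n) // s.card = 2},
      |∏ i ∈ (T : Finset (Fin n)), bkChi n F i - ∏ i ∈ (T : Finset (Fin n)), bkChi n G i| ^ p
        = if ((T : Finset (Fin n)) ∩ symmDiff F G).card = 1 then (2:ℝ)^p else 0 :=
    fun T => bk_term p hp0 F G T T.2
  simp_rw [hterm]
  rw [Finset.sum_ite, Finset.sum_const, Finset.sum_const_zero, add_zero, nsmul_eq_mul]
  congr 2
  refine Finset.card_bij (fun T _ => (T : Finset (Fin n))) ?_ ?_ ?_
  · intro T hT
    rw [Finset.mem_filter] at hT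
    exact Finset.mem_filter.2 ⟨Finset.mem_powersetCard_univ.2 T.2, hT.2⟩
  · intro a _ b _ hab
    exact Subtype.ext hab
  · intro T hT
    rw [Finset.mem_filter, Finset.mem_powersetCard_univ] at hT
    exact ⟨⟨T, hT.1⟩, by simp [hT.2], rfl⟩

/-- For a prime power `q ≥ 2` and any real `p ≥ 1`, with `d = C(4q−1, 2)`, there is a finite
set `S` in `ℓ_p^d` of positive diameter that cannot be partitioned into fewer than
`C(4q−1, 2q−1) / C(4q−1, q−1)` parts each of diameter strictly smaller than that of `S`. -/
theorem borsuk_lp_primepower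
    (q : ℕ) (hq2 : 2 ≤ q) (hq : IsPrimePow q)
    (p : ℝ) (hp : 1 ≤ p) [Fact (1 ≤ ENNReal.ofReal p)] :
    ∃ S : Set (PiLp (ENNReal.ofReal p) (fun _ : Fin ((4*q - 1).choose 2) => ℝ)),
      S.Finite ∧ 0 < Metric.diam S ∧
      ∀ (m : ℕ) (P : Fin m → Set (PiLp (ENNReal.ofReal p) (fun _ : Fin ((4*q - 1).choose 2) => ℝ))),
        (m : ℝ) < ((4*q - 1).choose (2*q - 1) : ℝ) / ((4*q - 1).choose (q - 1) : ℝ) →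
        S = ⋃ i, P i →
        (∀ i j, i ≠ j → Disjoint (P i) (P j)) →
        ∃ i, Metric.diam S ≤ Metric.diam (P i) := by
  classical
  obtain ⟨pp, s, hpp, hs, hQ⟩ := hq
  have hppp : pp.Prime := hpp.nat_prime
  have hp0 : 0 < p := lt_of_lt_of_le one_pos hp
  set n : ℕ := 4*q - 1 with hn
  set d : ℕ := n.choose 2 with hd
  have hcardpair : Fintype.card {s : Finset (Fin n) // s.card = 2} = d := by
    rw [Fintype.card_finset_len, Fintype.card_fin]
  let e : {s : Finset (Fin n) // s.card = 2} ≃ Fin d := Fintype.equivFinOfCardEq hcardpair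
  set v : Finset (Fin n) → PiLp (ENNReal.ofReal p) (fun _ : Fin d => ℝ) :=
    bkVec (ENNReal.ofReal p) e with hv
  set Fall : Finset (Finset (Fin n)) := Finset.univ.powersetCard (2*q-1) with hFall
  have hmemFall : ∀ F, F ∈ Fall ↔ F.card = 2*q-1 := by
    intro F; rw [hFall, Finset.mem_powersetCard_univ]
  -- distance formula
  have hdist : ∀ F G : Finset (Fin n),
      dist (v F) (v G) = (((symmDiff F G).card * (n - (symmDiff F G).card) : ℕ) * (2:ℝ)^p) ^ (1/p) := by
    intro F G
    rw [hv, bk_dist p hp e F G, bk_count (symmDiff F G)]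
  set Nmax : ℕ := 2*q*(2*q-1) with hNmax
  set gmax : ℝ := ((Nmax : ℝ) * (2:ℝ)^p) ^ (1/p) with hgmax
  have h2p : (0:ℝ) < (2:ℝ)^p := Real.rpow_pos_of_pos (by norm_num) p
  have hinvp : (0:ℝ) < 1/p := by positivity
  have hgmax_pos : 0 < gmax := by
    apply Real.rpow_pos_of_pos
    apply mul_pos _ h2p
    have : 0 < Nmax := by rw [hNmax]; exact Nat.mul_pos (by omega) (by omega)
    exact_mod_cast this
  -- diameter pair
  have hDeq : ∀ F G : Finset (Fin n), F.card = 2*q-1 → G.card = 2*q-1 →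
      (symmDiff F G).card + 2 * (F ∩ G).card = (2*q-1) + (2*q-1) := by
    intro F G hF hG
    have := bk_card_symmDiff F G
    omega
  have hclaim1 : ∀ F G : Finset (Fin n), F.card = 2*q-1 → G.card = 2*q-1 →
      (F ∩ G).card = q-1 → dist (v F) (v G) = gmax := by
    intro F G hF hG ht
    have hD := hDeq F G hF hG
    have hDval : (symmDiff F G).card = 2*q := by omega
    rw [hdist F G, hDval]
    have : n - 2*q = 2*q - 1 := by omega
    rw [this]
  have hclaim2 : ∀ F G : Finset (Fin n), F.card = 2*q-1 → G.card = 2*q-1 →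
      (F ∩ G).card ≠ q-1 → F ≠ G → dist (v F) (v G) < gmax := by
    intro F G hF hG ht hne
    have hD := hDeq F G hF hG
    have htle : (F ∩ G).card ≤ 2*q - 1 := by
      calc (F ∩ G).card ≤ F.card := Finset.card_le_card Finset.inter_subset_left
      _ = 2*q-1 := hF
    have htlt : (F ∩ G).card < 2*q - 1 := by
      rcases lt_or_eq_of_le htle with h | h
      · exact h
      · exfalso
        have : F ∩ G = F := Finset.eq_of_subset_of_card_le Finset.inter_subset_left
          (by omega)
        have hFG : F ⊆ G := by
          intro x hx
          rw [← this] at hx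
          exact (Finset.mem_inter.1 hx).2
        exact hne (Finset.eq_of_subset_of_card_le hFG (by omega))
    have hDeven : Even (symmDiff F G).card := ⟨(2*q-1) - (F ∩ G).card, by omega⟩
    have hDle : (symmDiff F G).card ≤ 4*q - 2 := by omega
    have hDne : (symmDiff F G).card ≠ 2*q := by omega
    have hquad := bk_quad q hq2 _ hDeven hDle hDne
    rw [hdist F G, hgmax, hNmax]
    apply Real.rpow_lt_rpow (by positivity) _ hinvp
    apply mul_lt_mul_of_pos_right _ h2p
    have hnn : n - (symmDiff F G).card = 4*q - 1 - (symmDiff F G).card := by omega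
    have hquad' : (symmDiff F G).card * (n - (symmDiff F G).card) < 2*q*(2*q-1) := by
      rw [hnn]; exact hquad
    exact_mod_cast hquad'
  have hdle : ∀ F G : Finset (Fin n), F.card = 2*q-1 → G.card = 2*q-1 →
      dist (v F) (v G) ≤ gmax := by
    intro F G hF hG
    by_cases hne : F = G
    · subst hne; rw [dist_self]; exact hgmax_pos.le
    by_cases ht : (F ∩ G).card = q-1
    · exact (hclaim1 F G hF hG ht).le
    · exact (hclaim2 F G hF hG ht hne).le
  -- the set S
  -- an explicit pair at maximal distance
  set F0 : Finset (Fin n) := Finset.univ.filter (fun i => 0 ≤ i.val ∧ i.val < 2*q-1) with hF0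
  set G0 : Finset (Fin n) := Finset.univ.filter (fun i => q ≤ i.val ∧ i.val < 3*q-1) with hG0
  have hF0card : F0.card = 2*q-1 := by
    rw [hF0, bk_card_Ico n 0 (2*q-1) (by omega)]
    omega
  have hG0card : G0.card = 2*q-1 := by
    rw [hG0, bk_card_Ico n q (3*q-1) (by omega)]
    omega
  have hinter : (F0 ∩ G0).card = q-1 := by
    have hFG : F0 ∩ G0 = Finset.univ.filter (fun i : Fin n => q ≤ i.val ∧ i.val < 2*q-1) := by
      ext x
      simp only [hF0, hG0, Finset.mem_inter, Finset.mem_filter, Finset.mem_univ, true_and]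
      omega
    rw [hFG, bk_card_Ico n q (2*q-1) (by omega)]
    omega
  set S : Set (PiLp (ENNReal.ofReal p) (fun _ : Fin d => ℝ)) := ↑(Fall.image v) with hS
  refine ⟨S, Finset.finite_toSet _, ?_, ?_⟩
  case _ =>
    -- positive diameter
    have hmem0 : v F0 ∈ S :=
      Finset.mem_coe.2 (Finset.mem_image_of_mem v ((hmemFall F0).mpr hF0card))
    have hmem1 : v G0 ∈ S :=
      Finset.mem_coe.2 (Finset.mem_image_of_mem v ((hmemFall G0).mpr hG0card))
    have hge : gmax ≤ Metric.diam S := by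
      rw [← hclaim1 F0 G0 hF0card hG0card hinter]
      exact Metric.dist_le_diam_of_mem (Finset.finite_toSet _).isBounded hmem0 hmem1
    linarith
  case _ =>
    have hSdiam : Metric.diam S = gmax := by
      apply le_antisymm
      · apply Metric.diam_le_of_forall_dist_le hgmax_pos.le
        intro x hx y hy
        rw [Finset.mem_coe, Finset.mem_image] at hx hy
        obtain ⟨F, hF, rfl⟩ := hx
        obtain ⟨G, hG, rfl⟩ := hy
        exact hdle F G ((hmemFall F).mp hF) ((hmemFall G).mp hG)
      · rw [← hclaim1 F0 G0 hF0card hG0card hinter]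
        exact Metric.dist_le_diam_of_mem (Finset.finite_toSet _).isBounded
          (Finset.mem_coe.2 (Finset.mem_image_of_mem v ((hmemFall F0).mpr hF0card)))
          (Finset.mem_coe.2 (Finset.mem_image_of_mem v ((hmemFall G0).mpr hG0card)))
    intro m P hm hunion hdisj
    by_contra hcon
    push_neg at hcon
    -- the family of sets mapped into each part
    set Fam : Fin m → Finset (Finset (Fin n)) := fun i => Fall.filter (fun F => v F ∈ P i) with hFam
    have hPsub : ∀ i, P i ⊆ S := by
      intro i
      rw [hunion]
      exact Set.subset_iUnion _ i
    have hFW : ∀ i, (Fam i).card ≤ n.choose (q-1) := by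
      intro i
      apply bk_FW pp s q hppp hQ.symm hq2 n
      · intro A hA
        rw [hFam, Finset.mem_filter] at hA
        exact (hmemFall A).mp hA.1
      · intro A hA B hB hAB hcontra
        rw [hFam, Finset.mem_filter] at hA hB
        have hdAB : dist (v A) (v B) = gmax :=
          hclaim1 A B ((hmemFall A).mp hA.1) ((hmemFall B).mp hB.1) hcontra
        have hbd : Bornology.IsBounded (P i) :=
          ((Finset.finite_toSet _).subset (hPsub i)).isBounded
        have := Metric.dist_le_diam_of_mem hbd hA.2 hB.2
        have hlt := hcon i
        rw [hSdiam] at hlt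
        linarith [hdAB ▸ this]
    have hcover : Fall ⊆ Finset.univ.biUnion Fam := by
      intro F hF
      have hvF : v F ∈ S :=
        Finset.mem_coe.2 (Finset.mem_image_of_mem v hF)
      rw [hunion, Set.mem_iUnion] at hvF
      obtain ⟨i, hi⟩ := hvF
      exact Finset.mem_biUnion.2 ⟨i, Finset.mem_univ i, Finset.mem_filter.2 ⟨hF, hi⟩⟩
    have hcount : Fall.card ≤ ∑ i, (Fam i).card :=
      le_trans (Finset.card_le_card hcover) Finset.card_biUnion_le
    have hsum : ∑ i, (Fam i).card ≤ m * n.choose (q-1) := by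
      calc ∑ i, (Fam i).card ≤ Finset.univ.card * n.choose (q-1) :=
        Finset.sum_le_card_nsmul _ _ _ (fun i _ => hFW i)
      _ = m * n.choose (q-1) := by rw [Finset.card_univ, Fintype.card_fin]
    have hFallcard : Fall.card = n.choose (2*q-1) := by
      rw [hFall, Finset.card_powersetCard, Finset.card_univ, Fintype.card_fin]
    have hMpos : (0:ℝ) < (n.choose (q-1) : ℝ) := by
      exact_mod_cast Nat.choose_pos (show q-1 ≤ n by omega)
    have hlt : (m : ℝ) * (n.choose (q-1) : ℝ) < (n.choose (2*q-1) : ℝ) :=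
      (lt_div_iff₀ hMpos).mp hm
    have hge : (n.choose (2*q-1) : ℝ) ≤ (m : ℝ) * (n.choose (q-1) : ℝ) := by
      have : n.choose (2*q-1) ≤ m * n.choose (q-1) := hFallcard ▸ le_trans hcount hsum
      exact_mod_cast this
    linarith
end

section
/- (Frankl–Wilson) Let n, k, t be natural numbers such that 2t < k < n/2 and k − t is a prime power, and let V be the set of all vectors in {0,1}^n with exactly k coordinates equal to 1. Then every subset of V with more than C(n, k−t−1) elements contains two vectors x, y such that the number of indices i with x_i = y_i = 1 is exactly t. -/
open Finset

private lemma ringchoose_neg (m r : ℕ) :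
    Ring.choose (-(m:ℤ) - 1) r = (-1)^r * ((m + r).choose r : ℤ) := by
  rcases Nat.eq_zero_or_pos (m + r) with h | h
  · obtain ⟨rfl, rfl⟩ := Nat.add_eq_zero.mp h
    simp [Ring.choose_zero_right]
  · have hcast : (-(m:ℤ) - 1 - r + 1) = Int.negSucc (m + r - 1) := by
      rw [Int.negSucc_eq]
      have : ((m + r - 1 : ℕ) : ℤ) = (m : ℤ) + r - 1 := by
        push_cast [h]; ring
      rw [this]; ring
    rw [Ring.choose, Ring.multichoose, hcast]
    show (Int.multichoose (Int.negSucc (m + r - 1)) r) = _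
    simp only [Int.multichoose]
    rw [Nat.sub_add_cancel h]
    rw [Int.coe_negOnePow_natCast]

private lemma Gsum (t r s : ℕ) :
    Ring.choose ((s:ℤ) - t - 1) r
      = ∑ j ∈ range (r+1), (s.choose j : ℤ) * ((-1)^(r-j) * ((t + (r-j)).choose (r-j) : ℤ)) := by
  have h : ((s:ℤ) - t - 1) = (s:ℤ) + (-(t:ℤ) - 1) := by ring
  rw [h, Ring.add_choose_eq r (Commute.all _ _)]
  rw [Finset.Nat.sum_antidiagonal_eq_sum_range_succ_mk]
  refine Finset.sum_congr rfl fun j hj => ?_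
  rw [Ring.choose_natCast, ringchoose_neg]

private lemma choose_pow_add_eq_one (p a r : ℕ) (hp : p.Prime) (hr : r < p^a) :
    ((p^a + r).choose (p^a) : ZMod p) = 1 := by
  have hV := Nat.add_choose_eq (p^a) r (p^a)
  have h2 : (((p^a + r).choose (p^a) : ℕ) : ZMod p)
      = ∑ ij ∈ antidiagonal (p^a), ((p^a).choose ij.1 : ZMod p) * (r.choose ij.2) := by
    rw [hV]; push_cast; rfl
  rw [h2, Finset.sum_eq_single (p^a, 0)]
  · simp
  · rintro ⟨i, j⟩ hij hne
    rw [Finset.HasAntidiagonal.mem_antidiagonal] at hij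
    simp only at hne ⊢
    rcases Nat.eq_zero_or_pos j with rfl | hj
    · exact absurd (by rw [show i = p^a by omega]) hne
    · rcases Nat.eq_zero_or_pos i with rfl | hi
      · have h0 : r.choose j = 0 := Nat.choose_eq_zero_of_lt (by omega)
        simp [h0]
      · have hipa : i ≠ p^a := by omega
        have hdvd : (p : ℕ) ∣ (p^a).choose i := hp.dvd_choose_pow (by omega) hipa
        rw [(ZMod.natCast_eq_zero_iff _ _).mpr hdvd, zero_mul]
  · intro h
    exact absurd (Finset.HasAntidiagonal.mem_antidiagonal.mpr (by simp)) h

private lemma choose_pow_sub_one_eq_zero (p a j : ℕ) (hp : p.Prime) (ha : 0 < a)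
    (hj : 1 ≤ j) (hj2 : j < p^a) :
    ((p^a - 1 + j).choose (p^a - 1) : ZMod p) = 0 := by
  have hq1 : 1 ≤ p^a := Nat.one_le_pow _ _ hp.pos
  have hpas : (p^a - 1 + j) + 1 = p^a + j := by omega
  have hPascal : (p^a + j).choose (p^a) =
      (p^a - 1 + j).choose (p^a - 1) + (p^a - 1 + j).choose (p^a) := by
    rw [← hpas, ← Nat.sub_add_cancel hq1]
    exact Nat.choose_succ_succ _ _
  have h1 : ((p^a + j).choose (p^a) : ZMod p) = 1 := choose_pow_add_eq_one p a j hp hj2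
  have h2 : ((p^a - 1 + j).choose (p^a) : ZMod p) = 1 := by
    have heq : p^a - 1 + j = p^a + (j - 1) := by omega
    rw [heq]
    exact choose_pow_add_eq_one p a (j-1) hp (by omega)
  have hcast := congrArg (fun n : ℕ => (n : ZMod p)) hPascal
  simp only [Nat.cast_add] at hcast
  rw [h1, h2] at hcast
  exact right_eq_add.mp hcast

private lemma powerset_inter' {α : Type*} [DecidableEq α] (A S : Finset α) :
    (S ∩ A).powerset = A.powerset.filter (fun T => T ⊆ S) := by
  ext T
  simp only [mem_powerset, mem_filter, subset_inter_iff]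
  tauto

private lemma count_supersets' {α : Type*} [Fintype α] [DecidableEq α] (r : ℕ) (T B : Finset α)
    (hTB : T ⊆ B) (hTr : T.card ≤ r) :
    ((Finset.powersetCard r (Finset.univ : Finset α)).filter
        (fun S => T ⊆ S ∧ S ⊆ B)).card
      = (B.card - T.card).choose (r - T.card) := by
  rw [← Finset.card_sdiff_of_subset hTB, ← Finset.card_powersetCard]
  apply Finset.card_bij' (fun S _ => S \ T) (fun U _ => U ∪ T)
  · intro S hS
    simp only [mem_filter, Finset.mem_powersetCard] at hS
    obtain ⟨⟨_, hcard⟩, hTS, hSB⟩ := hS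
    rw [Finset.mem_powersetCard]
    exact ⟨sdiff_subset_sdiff hSB (le_refl T), by rw [card_sdiff_of_subset hTS, hcard]⟩
  · intro U hU
    rw [Finset.mem_powersetCard] at hU
    obtain ⟨hUB, hcard⟩ := hU
    have hdisj : Disjoint U T := (Finset.sdiff_disjoint.mono_left hUB)
    simp only [mem_filter, Finset.mem_powersetCard]
    refine ⟨⟨subset_univ _, ?_⟩, subset_union_right, ?_⟩
    · rw [card_union_of_disjoint hdisj, hcard]
      omega
    · exact union_subset (hUB.trans sdiff_subset) hTB
  · intro S hS
    simp only [mem_filter] at hS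
    exact sdiff_union_of_subset hS.2.1
  · intro U hU
    rw [Finset.mem_powersetCard] at hU
    have hdisj : Disjoint U T := (Finset.sdiff_disjoint.mono_left hU.1)
    rw [union_sdiff_right, sdiff_eq_self_of_disjoint hdisj]

private lemma slice_expand {α : Type*} [Fintype α] [DecidableEq α] (k r : ℕ) (w : ℕ → ℚ)
    (A B : Finset α) (hB : B.card = k) :
    ∑ S ∈ Finset.powersetCard r (Finset.univ : Finset α),
      (∑ T ∈ (S ∩ A).powerset, w T.card) * (if S ⊆ B then 1 else 0)
    = ∑ T ∈ (A ∩ B).powerset,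
        (if T.card ≤ r then w T.card * ((k - T.card).choose (r - T.card)) else 0) := by
  have step1 : ∀ S : Finset α,
      (∑ T ∈ (S ∩ A).powerset, w T.card) * (if S ⊆ B then 1 else 0)
      = ∑ T ∈ A.powerset, (if T ⊆ S ∧ S ⊆ B then w T.card else 0) := by
    intro S
    rw [powerset_inter' A S, Finset.sum_filter]
    rw [Finset.sum_mul]
    refine Finset.sum_congr rfl fun T _ => ?_
    by_cases h1 : T ⊆ S <;> by_cases h2 : S ⊆ B <;> simp [h1, h2]
  simp_rw [step1]
  rw [Finset.sum_comm]
  have step2 : ∀ T : Finset α, T ∈ A.powerset →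
      (∑ S ∈ Finset.powersetCard r (Finset.univ : Finset α),
        (if T ⊆ S ∧ S ⊆ B then w T.card else 0))
      = (if T ⊆ B ∧ T.card ≤ r then w T.card * ((k - T.card).choose (r - T.card)) else 0) := by
    intro T _
    rw [← Finset.sum_filter, Finset.sum_const, nsmul_eq_mul]
    by_cases hTB : T ⊆ B
    · by_cases hTr : T.card ≤ r
      · rw [count_supersets' r T B hTB hTr, if_pos ⟨hTB, hTr⟩, hB, mul_comm]
      · rw [if_neg (by tauto)]
        have hfe : (Finset.powersetCard r (Finset.univ : Finset α)).filter
            (fun S => T ⊆ S ∧ S ⊆ B) = ∅ := by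
          rw [Finset.filter_eq_empty_iff]
          intro S hS ⟨h1, _⟩
          rw [Finset.mem_powersetCard] at hS
          exact hTr (hS.2 ▸ Finset.card_le_card h1)
        rw [hfe]; simp
    · rw [if_neg (by tauto)]
      have hfe : (Finset.powersetCard r (Finset.univ : Finset α)).filter
          (fun S => T ⊆ S ∧ S ⊆ B) = ∅ := by
        rw [Finset.filter_eq_empty_iff]
        intro S hS ⟨h1, h2⟩
        exact hTB (h1.trans h2)
      rw [hfe]; simp
  rw [Finset.sum_congr rfl step2]
  rw [show (A ∩ B).powerset = A.powerset.filter (fun T => T ⊆ B) by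
    rw [Finset.inter_comm]; exact powerset_inter' A B]
  rw [Finset.sum_filter]
  refine Finset.sum_congr rfl fun T _ => ?_
  by_cases h1 : T ⊆ B <;> by_cases h2 : T.card ≤ r <;> simp [h1, h2]

private lemma powerset_sum_card {α : Type*} [DecidableEq α] (r : ℕ) (M : Finset α) (g : ℕ → ℚ) :
    ∑ T ∈ M.powerset, (if T.card ≤ r then g T.card else 0)
    = ∑ j ∈ range (r+1), (M.card.choose j : ℚ) * g j := by
  set F : ℕ → ℚ := fun j => if j ≤ r then (M.card.choose j : ℚ) * g j else 0 with hF
  have h1 : ∑ T ∈ M.powerset, (if T.card ≤ r then g T.card else 0)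
      = ∑ j ∈ range (M.card + 1), F j := by
    rw [Finset.powerset_card_disjiUnion]
    erw [Finset.sum_disjiUnion]
    refine Finset.sum_congr rfl fun j _ => ?_
    have hin : ∀ T ∈ Finset.powersetCard j M,
        (if T.card ≤ r then g T.card else 0) = (if j ≤ r then g j else 0) := by
      intro T hT
      rw [Finset.mem_powersetCard] at hT
      rw [hT.2]
    rw [Finset.sum_congr rfl hin, Finset.sum_const, Finset.card_powersetCard, nsmul_eq_mul, hF]
    by_cases h : j ≤ r <;> simp [h]
  have h2 : ∑ j ∈ range (M.card + 1), F j = ∑ j ∈ range (M.card + r + 1), F j := by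
    apply Finset.sum_subset
    · apply Finset.range_subset_range.mpr; omega
    · intro j _ hj
      rw [Finset.mem_range, not_lt] at hj
      have hc0 : M.card.choose j = 0 := Nat.choose_eq_zero_of_lt (by omega)
      rw [hF]
      by_cases h : j ≤ r <;> simp [h, hc0]
  have h3 : ∑ j ∈ range (r + 1), (M.card.choose j : ℚ) * g j
      = ∑ j ∈ range (M.card + r + 1), F j := by
    rw [show ∑ j ∈ range (r + 1), (M.card.choose j : ℚ) * g j = ∑ j ∈ range (r+1), F j from
      Finset.sum_congr rfl fun j hj => by
        rw [Finset.mem_range] at hj; rw [hF]; simp [Nat.lt_succ_iff.mp hj]]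
    apply Finset.sum_subset
    · apply Finset.range_subset_range.mpr; omega
    · intro j _ hj
      rw [Finset.mem_range, not_lt] at hj
      rw [hF]; simp only [if_neg (by omega : ¬ j ≤ r)]
  rw [h1, h2, ← h3]

private lemma FW_main {α : Type*} [Fintype α] [DecidableEq α] (p a t k : ℕ)
    (hp : p.Prime) (ha : 0 < a) (hk : k = t + p^a) (htq : t < p^a)
    (𝒜 : Finset (Finset α)) (hcard : ∀ A ∈ 𝒜, A.card = k)
    (hint : ∀ A ∈ 𝒜, ∀ B ∈ 𝒜, A ≠ B → (A ∩ B).card ≠ t) :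
    𝒜.card ≤ (Fintype.card α).choose (p^a - 1) := by
  classical
  set q := p^a with hqdef
  set r := q - 1 with hrdef
  have hq1 : 1 ≤ q := Nat.one_le_pow _ _ hp.pos
  have hrk : r ≤ k := by omega
  set c : ℕ → ℤ := fun j => (-1)^(r-j) * ((t + (r-j)).choose (r-j) : ℤ) with hc
  set N : ℕ → ℤ := fun s => ∑ j ∈ range (r+1), (s.choose j : ℤ) * c j with hN
  have hNG : ∀ s : ℕ, N s = Ring.choose ((s:ℤ) - t - 1) r := fun s => (Gsum t r s).symm
  have hNk : N k = 1 := by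
    rw [hNG, show ((k:ℤ) - t - 1) = ((r:ℕ):ℤ) by push_cast [hk, hrdef]; omega,
      Ring.choose_natCast, Nat.choose_self, Nat.cast_one]
  have hNmid : ∀ s, t < s → s < k → N s = 0 := by
    intro s h1 h2
    rw [hNG, show ((s:ℤ) - t - 1) = ((s - t - 1 : ℕ):ℤ) by push_cast; omega,
      Ring.choose_natCast, Nat.choose_eq_zero_of_lt (by omega), Nat.cast_zero]
  have hNlow : ∀ s, s < t → ((N s : ℤ) : ZMod p) = 0 := by
    intro s h1
    rw [hNG, show ((s:ℤ) - t - 1) = (-(((t - s : ℕ)):ℤ) - 1) by push_cast; omega,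
      ringchoose_neg]
    push_cast
    rw [show (t - s) + r = r + (t - s) by ring, show (r : ℕ) = p^a - 1 from hrdef,
      choose_pow_sub_one_eq_zero p a (t - s) hp ha (by omega) (by omega), mul_zero]
  -- matrices
  set D := Finset.powersetCard r (Finset.univ : Finset α) with hD
  set w : ℕ → ℚ := fun d => (c d : ℚ) / ((k - d).choose (r - d)) with hw
  have hwc : ∀ d, d ≤ r → w d * ((k - d).choose (r - d) : ℚ) = (c d : ℚ) := by
    intro d hd
    rw [hw]
    apply div_mul_cancel₀
    have hpos : 0 < (k - d).choose (r - d) := Nat.choose_pos (by omega)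
    exact_mod_cast hpos.ne'
  let Amat : Matrix {A // A ∈ 𝒜} {S // S ∈ D} ℚ :=
    fun A S => ∑ T ∈ (S.1 ∩ A.1).powerset, w T.card
  let Emat : Matrix {S // S ∈ D} {A // A ∈ 𝒜} ℚ :=
    fun S B => if S.1 ⊆ B.1 then 1 else 0
  let Mz : Matrix {A // A ∈ 𝒜} {A // A ∈ 𝒜} ℤ :=
    fun A B => N ((A.1 ∩ B.1).card)
  have hprod : Amat * Emat = Mz.map (Int.cast : ℤ → ℚ) := by
    ext A B
    rw [Matrix.mul_apply]
    have : ∀ f : Finset α → ℚ, (∑ S : {S // S ∈ D}, f S.1) = ∑ S ∈ D, f S :=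
      fun f => Finset.sum_coe_sort D f
    calc ∑ S : {S // S ∈ D}, Amat A S * Emat S B
        = ∑ S ∈ D, (∑ T ∈ (S ∩ A.1).powerset, w T.card) * (if S ⊆ B.1 then 1 else 0) := by
          exact this (fun S => (∑ T ∈ (S ∩ A.1).powerset, w T.card) * (if S ⊆ B.1 then 1 else 0))
      _ = ∑ T ∈ (A.1 ∩ B.1).powerset,
            (if T.card ≤ r then w T.card * ((k - T.card).choose (r - T.card)) else 0) :=
          slice_expand k r w A.1 B.1 (hcard B.1 B.2)
      _ = ∑ T ∈ (A.1 ∩ B.1).powerset,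
            (if T.card ≤ r then ((c T.card : ℤ) : ℚ) else 0) := by
          refine Finset.sum_congr rfl fun T _ => ?_
          by_cases h : T.card ≤ r
          · rw [if_pos h, if_pos h, hwc _ h]
          · rw [if_neg h, if_neg h]
      _ = ∑ j ∈ range (r+1), (((A.1 ∩ B.1).card).choose j : ℚ) * ((c j : ℤ) : ℚ) :=
          powerset_sum_card r _ (fun j => ((c j : ℤ) : ℚ))
      _ = ((N ((A.1 ∩ B.1).card) : ℤ) : ℚ) := by
          rw [hN]; push_cast; ring
  haveI : Fact p.Prime := ⟨hp⟩
  have hmap1 : Mz.map (Int.cast : ℤ → ZMod p) = 1 := by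
    ext A B
    by_cases h : A = B
    · subst h
      have : A.1 ∩ A.1 = A.1 := Finset.inter_self _
      rw [Matrix.map_apply]
      simp only [Matrix.map_apply, Mz, this, hcard A.1 A.2, hNk, Matrix.one_apply_eq, Int.cast_one]
    · have hne : A.1 ≠ B.1 := fun hc => h (Subtype.ext hc)
      have hsub : A.1 ∩ B.1 ⊆ A.1 := Finset.inter_subset_left
      have hslt : (A.1 ∩ B.1).card < k := by
        rcases Nat.lt_or_ge ((A.1 ∩ B.1).card) k with h' | h'
        · exact h'
        · exfalso
          have h1 : A.1 ∩ B.1 = A.1 :=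
            Finset.eq_of_subset_of_card_le hsub (by rw [hcard A.1 A.2]; exact h')
          have h2 : A.1 ⊆ B.1 := by rw [← h1]; exact Finset.inter_subset_right
          exact hne (Finset.eq_of_subset_of_card_le h2
            (by rw [hcard A.1 A.2, hcard B.1 B.2]))
      have hst : (A.1 ∩ B.1).card ≠ t := hint A.1 A.2 B.1 B.2 hne
      have hzero : ((N ((A.1 ∩ B.1).card) : ℤ) : ZMod p) = 0 := by
        rcases Nat.lt_or_ge ((A.1 ∩ B.1).card) t with h' | h'
        · exact hNlow _ h'
        · rw [hNmid _ (by omega) hslt, Int.cast_zero]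
      rw [Matrix.map_apply]
      simp only [Matrix.map_apply, Mz, hzero, Matrix.one_apply_ne h]
  have hdetZ : Mz.det ≠ 0 := by
    intro h0
    have h1 : ((Mz.det : ℤ) : ZMod p) = 1 := by
      have hh := RingHom.map_det (Int.castRingHom (ZMod p)) Mz
      rw [RingHom.mapMatrix_apply] at hh
      show (Int.castRingHom (ZMod p)) Mz.det = 1
      rw [hh, show Mz.map (Int.castRingHom (ZMod p)) = 1 from hmap1, Matrix.det_one]
    rw [h0, Int.cast_zero] at h1
    exact zero_ne_one h1
  have hdetQ : (Amat * Emat).det ≠ 0 := by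
    rw [hprod]
    have hh := RingHom.map_det (Int.castRingHom ℚ) Mz
    rw [RingHom.mapMatrix_apply] at hh
    rw [show (Mz.map (Int.cast : ℤ → ℚ)) = Mz.map (Int.castRingHom ℚ) from rfl, ← hh]
    show ((Mz.det : ℤ) : ℚ) ≠ 0
    exact_mod_cast hdetZ
  have hunit : IsUnit (Amat * Emat) := by
    rw [Matrix.isUnit_iff_isUnit_det]
    exact isUnit_iff_ne_zero.mpr hdetQ
  have hrank1 : (Amat * Emat).rank = Fintype.card {A // A ∈ 𝒜} :=
    Matrix.rank_of_isUnit _ hunit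
  have hrank2 : (Amat * Emat).rank ≤ Fintype.card {S // S ∈ D} :=
    le_trans (Matrix.rank_mul_le_right Amat Emat) (Matrix.rank_le_card_height Emat)
  have hfinal : Fintype.card {A // A ∈ 𝒜} ≤ Fintype.card {S // S ∈ D} := by
    rw [← hrank1]; exact hrank2
  rw [Fintype.card_coe, Fintype.card_coe] at hfinal
  rw [hD, Finset.card_powersetCard, Finset.card_univ] at hfinal
  exact le_trans hfinal (le_refl _)

/-- **Frankl–Wilson theorem.** Let `n, k, t ∈ ℕ` with `2t < k < n/2` and `k − t` a prime
power, and let `V` be the set of all vectors in `{0,1}^n ⊆ ℝ^n` with exactly `k` coordinates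
equal to `1`. Then every subset of `V` with more than `C(n, k−t−1)` elements contains two
vectors sharing exactly `t` common unit coordinates. -/
theorem frankl_wilson
    (n k t : ℕ) (htk : 2 * t < k) (hkn : 2 * k < n)
    (hpp : IsPrimePow (k - t))
    (W : Finset (Fin n → ℝ))
    (hW01 : ∀ x ∈ W, ∀ i, x i = 0 ∨ x i = 1)
    (hWk : ∀ x ∈ W, {i | x i = 1}.ncard = k)
    (hWcard : n.choose (k - t - 1) < W.card) :
    ∃ x ∈ W, ∃ y ∈ W, x ≠ y ∧ {i | x i = 1 ∧ y i = 1}.ncard = t := by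
  classical
  by_contra hcon
  push_neg at hcon
  set supp : (Fin n → ℝ) → Finset (Fin n) :=
    fun x => Finset.univ.filter (fun i => x i = 1) with hsupp
  have hsupp_mem : ∀ x i, i ∈ supp x ↔ x i = 1 := by
    intro x i; simp [hsupp]
  have hsupp_card : ∀ x ∈ W, (supp x).card = k := by
    intro x hx
    rw [← hWk x hx, ← Set.ncard_coe_finset]
    congr 1
    ext i; simp [hsupp]
  have hsupp_inj : ∀ x ∈ W, ∀ y ∈ W, supp x = supp y → x = y := by
    intro x hx y hy hxy
    funext i
    rcases hW01 x hx i with h1 | h1 <;> rcases hW01 y hy i with h2 | h2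
    · rw [h1, h2]
    · exfalso
      have hi : i ∈ supp x := by rw [hxy, hsupp_mem]; exact h2
      rw [hsupp_mem] at hi
      rw [hi] at h1; norm_num at h1
    · exfalso
      have hi : i ∈ supp y := by rw [← hxy, hsupp_mem]; exact h1
      rw [hsupp_mem] at hi
      rw [hi] at h2; norm_num at h2
    · rw [h1, h2]
  obtain ⟨p, a, hp, ha, hq⟩ := hpp
  have hp' : p.Prime := Nat.prime_iff.mpr hp
  set 𝒜 := W.image supp with hA
  have hAcard : 𝒜.card = W.card :=
    Finset.card_image_of_injOn (fun x hx y hy h => hsupp_inj x hx y hy h)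
  have h1 : ∀ A ∈ 𝒜, A.card = k := by
    intro A hA'
    obtain ⟨x, hx, rfl⟩ := Finset.mem_image.mp hA'
    exact hsupp_card x hx
  have h2 : ∀ A ∈ 𝒜, ∀ B ∈ 𝒜, A ≠ B → (A ∩ B).card ≠ t := by
    intro A hA' B hB' hne
    obtain ⟨x, hx, rfl⟩ := Finset.mem_image.mp hA'
    obtain ⟨y, hy, rfl⟩ := Finset.mem_image.mp hB'
    have hxy : x ≠ y := fun h => hne (by rw [h])
    intro hct
    apply hcon x hx y hy hxy
    rw [← hct, ← Set.ncard_coe_finset]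
    congr 1
    ext i
    simp [hsupp]
  have hbound := FW_main p a t k hp' ha (by omega) (by omega) 𝒜 h1 h2
  rw [Fintype.card_fin] at hbound
  rw [hq, hAcard] at hbound
  omega
end

section
/- Let n, k be natural numbers with 1 < k < n/2, and let p ≥ 1 and −1/2 ≤ λ ≤ 0 be real numbers. For x ∈ {0,1}^n with exactly k coordinates equal to 1, define x* ∈ ℓ_p^{C(n,2)}, indexed by pairs 1 ≤ i < j ≤ n, by x*_{i,j} = x_i x_j + λ x_i + λ x_j. If x, y ∈ {0,1}^n each have exactly k coordinates equal to 1 and share exactly t indices i with x_i = y_i = 1, then ‖x* − y*‖_p^p = a t² + b t + c, where a = −2|λ|^p − 2|1+λ|^p + |1+2λ|^p, b = 2(3k−n)|λ|^p + 2k|1+λ|^p + (1−2k)|1+2λ|^p, and c = 2k(n−2k)|λ|^p + k(k−1)|1+2λ|^p. -/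
theorem key_pt (p lam : ℝ) (hp : 1 ≤ p)
    (u v w z : ℝ) (hu : u = 0 ∨ u = 1) (hv : v = 0 ∨ v = 1)
    (hw : w = 0 ∨ w = 1) (hz : z = 0 ∨ z = 1) :
    |u*w + lam*u + lam*w - (v*z + lam*v + lam*z)| ^ p =
      |lam|^p * (u+v+w+z)
      - 2*|lam|^p * (u*v+u*w+u*z+v*w+v*z+w*z)
      + |1+2*lam|^p * (u*w+v*z)
      + (3*|lam|^p + |1+lam|^p - |1+2*lam|^p) * (u*v*w+u*v*z+u*w*z+v*w*z)
      + (-4*|lam|^p - 4*|1+lam|^p + 2*|1+2*lam|^p) * (u*v*w*z) := by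
  have hp0 : p ≠ 0 := by linarith
  rcases hu with rfl | rfl <;> rcases hv with rfl | rfl <;>
    rcases hw with rfl | rfl <;> rcases hz with rfl | rfl <;>
  · ring_nf
    try simp [Real.zero_rpow hp0]
    try (rw [← abs_neg]; ring_nf)

theorem diag_pt (p lam : ℝ) (hp : 1 ≤ p)
    (u v : ℝ) (hu : u = 0 ∨ u = 1) (hv : v = 0 ∨ v = 1) :
    |u*u + lam*u + lam*u - (v*v + lam*v + lam*v)| ^ p =
      0 + |1+2*lam|^p * u + |1+2*lam|^p * v + (-2*|1+2*lam|^p) * (u*v) := by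
  have hp0 : p ≠ 0 := by linarith
  rcases hu with rfl | rfl <;> rcases hv with rfl | rfl <;>
  · ring_nf
    try simp [Real.zero_rpow hp0]
    try (rw [← abs_neg]; ring_nf)

theorem sum_of_01 {n : ℕ} (x : Fin n → ℝ) (hx01 : ∀ i, x i = 0 ∨ x i = 1)
    {k : ℕ} (hxk : {i | x i = 1}.ncard = k) : ∑ i, x i = (k : ℝ) := by
  have : ∑ i, x i = ∑ i, (if x i = 1 then (1:ℝ) else 0) := by
    refine Finset.sum_congr rfl fun i _ => ?_
    rcases hx01 i with h | h <;> simp [h]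
  rw [this, Finset.sum_boole, ← hxk]
  rw [Set.ncard_eq_toFinset_card']
  simp [Set.toFinset_setOf]

theorem sum_mul_of_01 {n : ℕ} (x y : Fin n → ℝ) (hx01 : ∀ i, x i = 0 ∨ x i = 1)
    (hy01 : ∀ i, y i = 0 ∨ y i = 1)
    {t : ℕ} (hxyt : {i | x i = 1 ∧ y i = 1}.ncard = t) : ∑ i, x i * y i = (t : ℝ) := by
  have : ∑ i, x i * y i = ∑ i, (if x i = 1 ∧ y i = 1 then (1:ℝ) else 0) := by
    refine Finset.sum_congr rfl fun i _ => ?_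
    rcases hx01 i with h | h <;> rcases hy01 i with h' | h' <;> simp [h, h']
  rw [this, Finset.sum_boole, ← hxyt]
  rw [Set.ncard_eq_toFinset_card']
  simp [Set.toFinset_setOf]

theorem sum_lin {n : ℕ} (x y : Fin n → ℝ) {K K' T : ℝ}
    (hx : ∑ i, x i = K) (hy : ∑ i, y i = K') (hxy : ∑ i, x i * y i = T)
    (A B C D : ℝ) :
    ∑ i, (A + B * x i + C * y i + D * (x i * y i))
      = n * A + B * K + C * K' + D * T := by
  rw [Finset.sum_add_distrib, Finset.sum_add_distrib, Finset.sum_add_distrib,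
    ← Finset.mul_sum, ← Finset.mul_sum, ← Finset.mul_sum, hx, hy, hxy,
    Finset.sum_const, Finset.card_univ, Fintype.card_fin, nsmul_eq_mul]

theorem two_mul_sum_pairs {n : ℕ} (F : Fin n → Fin n → ℝ)
    (hsymm : ∀ i j, F i j = F j i) :
    2 * ∑ q : {q : Fin n × Fin n // q.1 < q.2}, F q.1.1 q.1.2
      = (∑ i, ∑ j, F i j) - ∑ i, F i i := by
  classical
  have h1 : ∑ q : {q : Fin n × Fin n // q.1 < q.2}, F q.1.1 q.1.2
      = ∑ q ∈ Finset.univ.filter (fun q : Fin n × Fin n => q.1 < q.2), F q.1 q.2 := by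
    exact (Finset.sum_subtype (p := fun q : Fin n × Fin n => q.1 < q.2)
      (Finset.univ.filter (fun q : Fin n × Fin n => q.1 < q.2))
      (by simp) (fun q => F q.1 q.2)).symm
  have h2 : ∑ q ∈ Finset.univ.filter (fun q : Fin n × Fin n => q.1 < q.2), F q.1 q.2
      = ∑ q ∈ Finset.univ.filter (fun q : Fin n × Fin n => q.2 < q.1), F q.1 q.2 := by
    refine Finset.sum_equiv (Equiv.prodComm (Fin n) (Fin n)) (by simp) ?_
    intro q hq
    exact hsymm q.1 q.2
  have h3 : ∑ q : Fin n × Fin n, F q.1 q.2 = ∑ i, ∑ j, F i j := Fintype.sum_prod_type _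
  have h4 := Finset.sum_filter_add_sum_filter_not Finset.univ
    (fun q : Fin n × Fin n => q.1 < q.2) (fun q => F q.1 q.2)
  have h5 := Finset.sum_filter_add_sum_filter_not
    (Finset.univ.filter (fun q : Fin n × Fin n => ¬ q.1 < q.2))
    (fun q : Fin n × Fin n => q.2 < q.1) (fun q => F q.1 q.2)
  have e1 : (Finset.univ.filter (fun q : Fin n × Fin n => ¬ q.1 < q.2)).filter
      (fun q : Fin n × Fin n => q.2 < q.1)
      = Finset.univ.filter (fun q : Fin n × Fin n => q.2 < q.1) := by
    rw [Finset.filter_filter]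
    apply Finset.filter_congr
    intro q _
    constructor
    · exact fun h => h.2
    · exact fun h => ⟨fun h' => absurd h (lt_asymm h'), h⟩
  have e2 : (Finset.univ.filter (fun q : Fin n × Fin n => ¬ q.1 < q.2)).filter
      (fun q : Fin n × Fin n => ¬ q.2 < q.1)
      = Finset.univ.filter (fun q : Fin n × Fin n => q.1 = q.2) := by
    rw [Finset.filter_filter]
    apply Finset.filter_congr
    intro q _
    constructor
    · exact fun h => le_antisymm (not_lt.1 h.2) (not_lt.1 h.1)
    · exact fun h => ⟨by omega, by omega⟩
  have e3 : ∑ q ∈ Finset.univ.filter (fun q : Fin n × Fin n => q.1 = q.2), F q.1 q.2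
      = ∑ i, F i i := by
    refine Finset.sum_nbij' (fun q => q.1) (fun i => (i, i)) ?_ ?_ ?_ ?_ ?_ <;>
      simp +contextual [eq_comm]
  rw [h1, h2]
  rw [e1, e2, e3] at h5
  rw [← h3, ← h4, ← h5, h2]
  ring

/-- Let `1 < k < n/2`, `p ≥ 1`, `−1/2 ≤ λ ≤ 0`. For `x ∈ {0,1}^n` with exactly `k` unit
coordinates define `x* ∈ ℓ_p^{C(n,2)}`, indexed by pairs `i < j`, by
`x*_{i,j} = x_i x_j + λ x_i + λ x_j`. If `x, y` each have exactly `k` unit coordinates and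
share exactly `t` common units, then `‖x* − y*‖_p^p = a t² + b t + c`, where
`a = −2|λ|^p − 2|1+λ|^p + |1+2λ|^p`,
`b = 2(3k−n)|λ|^p + 2k|1+λ|^p + (1−2k)|1+2λ|^p`,
`c = 2k(n−2k)|λ|^p + k(k−1)|1+2λ|^p`. -/
theorem star_dist_quadratic
    (n k t : ℕ) (p lam : ℝ) (hk : 1 < k) (hkn : 2 * k < n)
    (hp : 1 ≤ p) [Fact (1 ≤ ENNReal.ofReal p)]
    (hlam₁ : -(1/2) ≤ lam) (hlam₂ : lam ≤ 0)
    (x y : Fin n → ℝ)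
    (hx01 : ∀ i, x i = 0 ∨ x i = 1) (hxk : {i | x i = 1}.ncard = k)
    (hy01 : ∀ i, y i = 0 ∨ y i = 1) (hyk : {i | y i = 1}.ncard = k)
    (hxyt : {i | x i = 1 ∧ y i = 1}.ncard = t)
    (xs ys : PiLp (ENNReal.ofReal p) (fun _ : {q : Fin n × Fin n // q.1 < q.2} => ℝ))
    (hxs : xs = (WithLp.equiv _ _).symm
      (fun q : {q : Fin n × Fin n // q.1 < q.2} =>
        x q.1.1 * x q.1.2 + lam * x q.1.1 + lam * x q.1.2))
    (hys : ys = (WithLp.equiv _ _).symm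
      (fun q : {q : Fin n × Fin n // q.1 < q.2} =>
        y q.1.1 * y q.1.2 + lam * y q.1.1 + lam * y q.1.2)) :
    ‖xs - ys‖ ^ p =
      (-2 * |lam| ^ p - 2 * |1 + lam| ^ p + |1 + 2*lam| ^ p) * (t : ℝ)^2
      + (2 * (3 * (k : ℝ) - n) * |lam| ^ p + 2 * k * |1 + lam| ^ p
          + (1 - 2 * (k : ℝ)) * |1 + 2*lam| ^ p) * (t : ℝ)
      + (2 * k * ((n : ℝ) - 2 * k) * |lam| ^ p + k * ((k : ℝ) - 1) * |1 + 2*lam| ^ p) := by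
  have hp0 : p ≠ 0 := by linarith
  have hppos : (0:ℝ) < p := by linarith
  set α := |lam| ^ p with hα
  set β := |1 + lam| ^ p with hβ
  set γ := |1 + 2*lam| ^ p with hγ
  -- the coordinatewise function
  set F : Fin n → Fin n → ℝ := fun i j =>
    |x i * x j + lam * x i + lam * x j - (y i * y j + lam * y i + lam * y j)| ^ p with hF
  -- step 1 : norm to sum
  have htR : (ENNReal.ofReal p).toReal = p := ENNReal.toReal_ofReal (le_of_lt hppos)
  have hnorm : ‖xs - ys‖ = (∑ q : {q : Fin n × Fin n // q.1 < q.2}, F q.1.1 q.1.2) ^ (1/p) := by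
    rw [PiLp.norm_eq_sum (by rw [htR]; exact hppos)]
    rw [htR]
    congr 1
    refine Finset.sum_congr rfl fun q _ => ?_
    congr 1
    rw [hxs, hys]
    simp only [PiLp.sub_apply, WithLp.equiv_symm_apply, WithLp.ofLp_toLp, Real.norm_eq_abs]
  have hSnonneg : (0:ℝ) ≤ ∑ q : {q : Fin n × Fin n // q.1 < q.2}, F q.1.1 q.1.2 :=
    Finset.sum_nonneg fun q _ => Real.rpow_nonneg (abs_nonneg _) p
  have hstep1 : ‖xs - ys‖ ^ p = ∑ q : {q : Fin n × Fin n // q.1 < q.2}, F q.1.1 q.1.2 := by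
    rw [hnorm, ← Real.rpow_mul hSnonneg, one_div, inv_mul_cancel₀ hp0, Real.rpow_one]

  have hsx : ∑ i, x i = (k:ℝ) := sum_of_01 x hx01 hxk
  have hsy : ∑ i, y i = (k:ℝ) := sum_of_01 y hy01 hyk
  have hst : ∑ i, x i * y i = (t:ℝ) := sum_mul_of_01 x y hx01 hy01 hxyt
  have hsymm : ∀ i j, F i j = F j i := by
    intro i j
    simp only [hF]
    ring_nf
  have hkey : ∀ i j, F i j =
      α*(x i+y i+x j+y j)
      - 2*α*(x i*y i+x i*x j+x i*y j+y i*x j+y i*y j+x j*y j)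
      + γ*(x i*x j+y i*y j)
      + (3*α+β-γ)*(x i*y i*x j+x i*y i*y j+x i*x j*y j+y i*x j*y j)
      + (-4*α-4*β+2*γ)*(x i*y i*x j*y j) :=
    fun i j => key_pt p lam hp (x i) (y i) (x j) (y j) (hx01 i) (hy01 i) (hx01 j) (hy01 j)
  have hinner : ∀ u v : ℝ,
      ∑ j, (α*(u+v+x j+y j)
        - 2*α*(u*v+u*x j+u*y j+v*x j+v*y j+x j*y j)
        + γ*(u*x j+v*y j)
        + (3*α+β-γ)*(u*v*x j+u*v*y j+u*x j*y j+v*x j*y j)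
        + (-4*α-4*β+2*γ)*(u*v*x j*y j))
      = n*(α*(u+v) - 2*α*(u*v))
        + (α - 2*α*u - 2*α*v + γ*u + (3*α+β-γ)*(u*v))*k
        + (α - 2*α*u - 2*α*v + γ*v + (3*α+β-γ)*(u*v))*k
        + (-2*α + (3*α+β-γ)*(u+v) + (-4*α-4*β+2*γ)*(u*v))*t := by
    intro u v
    rw [Finset.sum_congr rfl (fun j _ =>
      show (α*(u+v+x j+y j)
        - 2*α*(u*v+u*x j+u*y j+v*x j+v*y j+x j*y j)
        + γ*(u*x j+v*y j)
        + (3*α+β-γ)*(u*v*x j+u*v*y j+u*x j*y j+v*x j*y j)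
        + (-4*α-4*β+2*γ)*(u*v*x j*y j))
        = (α*(u+v) - 2*α*(u*v))
          + (α - 2*α*u - 2*α*v + γ*u + (3*α+β-γ)*(u*v)) * x j
          + (α - 2*α*u - 2*α*v + γ*v + (3*α+β-γ)*(u*v)) * y j
          + (-2*α + (3*α+β-γ)*(u+v) + (-4*α-4*β+2*γ)*(u*v)) * (x j * y j)
        from by ring)]
    exact sum_lin x y hsx hsy hst _ _ _ _
  have houter : ∑ i, ∑ j, F i j
      = n*(2*(k:ℝ)*α - 2*(t:ℝ)*α)
        + ((n:ℝ)*α - 4*(k:ℝ)*α + (k:ℝ)*γ + (t:ℝ)*(3*α+β-γ))*k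
        + ((n:ℝ)*α - 4*(k:ℝ)*α + (k:ℝ)*γ + (t:ℝ)*(3*α+β-γ))*k
        + (-2*(n:ℝ)*α + 2*(k:ℝ)*(3*α+β-γ) + (t:ℝ)*(-4*α-4*β+2*γ))*t := by
    calc ∑ i, ∑ j, F i j
        = ∑ i, ((2*(k:ℝ)*α - 2*(t:ℝ)*α)
            + ((n:ℝ)*α - 4*(k:ℝ)*α + (k:ℝ)*γ + (t:ℝ)*(3*α+β-γ)) * x i
            + ((n:ℝ)*α - 4*(k:ℝ)*α + (k:ℝ)*γ + (t:ℝ)*(3*α+β-γ)) * y i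
            + (-2*(n:ℝ)*α + 2*(k:ℝ)*(3*α+β-γ) + (t:ℝ)*(-4*α-4*β+2*γ)) * (x i * y i)) := by
          refine Finset.sum_congr rfl fun i _ => ?_
          rw [Finset.sum_congr rfl (fun j _ => hkey i j), hinner (x i) (y i)]
          ring
      _ = _ := sum_lin x y hsx hsy hst _ _ _ _
  have hdiag : ∑ i, F i i = (n:ℝ)*0 + γ*k + γ*k + (-2*γ)*t :=
    calc ∑ i, F i i = ∑ i, (0 + γ * x i + γ * y i + (-2*γ) * (x i * y i)) :=
        Finset.sum_congr rfl fun i _ => diag_pt p lam hp (x i) (y i) (hx01 i) (hy01 i)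
      _ = _ := sum_lin x y hsx hsy hst 0 γ γ (-2*γ)
  have h2S := two_mul_sum_pairs F hsymm
  have h8 : ∑ q : {q : Fin n × Fin n // q.1 < q.2}, F q.1.1 q.1.2
      = ((∑ i, ∑ j, F i j) - ∑ i, F i i) / 2 := by linarith
  rw [hstep1, h8, houter, hdiag]
  ring
end

section
/- Let n, k be natural numbers with 1 < k < n/2 and let p ≥ 1 and −1/2 ≤ λ ≤ 0 be real numbers. Define a = −2|λ|^p − 2|1+λ|^p + |1+2λ|^p, b = 2(3k−n)|λ|^p + 2k|1+λ|^p + (1−2k)|1+2λ|^p, and c = 2k(n−2k)|λ|^p + k(k−1)|1+2λ|^p. Then for every integer t with 0 ≤ t < k, one has a t² + b t + c > 0. -/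
/-- Let `1 < k < n/2`, `p ≥ 1`, `−1/2 ≤ λ ≤ 0`, and define
`a = −2|λ|^p − 2|1+λ|^p + |1+2λ|^p`,
`b = 2(3k−n)|λ|^p + 2k|1+λ|^p + (1−2k)|1+2λ|^p`,
`c = 2k(n−2k)|λ|^p + k(k−1)|1+2λ|^p`.
Then for every integer `t` with `0 ≤ t < k`, one has `a t² + b t + c > 0`. -/
theorem quadratic_pos_on_range
    (n k : ℕ) (p lam a b c : ℝ) (hk : 1 < k) (hkn : 2 * k < n)
    (hp : 1 ≤ p) (hlam₁ : -(1/2) ≤ lam) (hlam₂ : lam ≤ 0)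
    (ha : a = -2 * |lam| ^ p - 2 * |1 + lam| ^ p + |1 + 2*lam| ^ p)
    (hb : b = 2 * (3 * (k : ℝ) - n) * |lam| ^ p + 2 * k * |1 + lam| ^ p
        + (1 - 2 * (k : ℝ)) * |1 + 2*lam| ^ p)
    (hc : c = 2 * k * ((n : ℝ) - 2 * k) * |lam| ^ p + k * ((k : ℝ) - 1) * |1 + 2*lam| ^ p) :
    ∀ t : ℤ, 0 ≤ t → t < (k : ℤ) → 0 < a * (t : ℝ)^2 + b * (t : ℝ) + c := by
  intro t ht ht2
  have hkR : (1:ℝ) < k := by exact_mod_cast hk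
  have hnR : 2*(k:ℝ) < n := by exact_mod_cast hkn
  have htR : (0:ℝ) ≤ (t:ℝ) := by exact_mod_cast ht
  have htk : (t:ℝ) + 1 ≤ (k:ℝ) := by
    have h : t + 1 ≤ (k:ℤ) := ht2
    exact_mod_cast h
  set A := |lam| ^ p with hA_def
  set B := |1 + lam| ^ p with hB_def
  set C := |1 + 2*lam| ^ p with hC_def
  have hA : 0 ≤ A := Real.rpow_nonneg (abs_nonneg _) p
  have hC : 0 ≤ C := Real.rpow_nonneg (abs_nonneg _) p
  have hB : 0 < B := Real.rpow_pos_of_pos (abs_pos.mpr (by linarith)) p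
  have hAC : 0 < A ∨ 0 < C := by
    rcases eq_or_lt_of_le hlam₂ with h | h
    · right
      exact Real.rpow_pos_of_pos (abs_pos.mpr (by subst h; norm_num)) p
    · left
      exact Real.rpow_pos_of_pos (abs_pos.mpr (ne_of_lt h)) p
  have key : a * (t:ℝ)^2 + b * (t:ℝ) + c
      = 2*((k:ℝ)-t)*((t:ℝ)+(n:ℝ)-2*k)*A + 2*(t:ℝ)*((k:ℝ)-t)*B
        + ((k:ℝ)-t)*((k:ℝ)-1-t)*C := by
    subst ha hb hc; ring
  rw [key]
  have hkt : 0 < (k:ℝ) - t := by linarith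
  have hnt : 0 < (t:ℝ) + (n:ℝ) - 2*k := by linarith
  have hk1t : 0 ≤ (k:ℝ) - 1 - t := by linarith
  rcases eq_or_lt_of_le htR with h0 | h0
  · have hk1t' : 0 < (k:ℝ) - 1 - t := by rw [← h0]; linarith
    have h2 : 0 ≤ 2*(t:ℝ)*((k:ℝ)-t)*B := mul_nonneg (mul_nonneg (by linarith) hkt.le) hB.le
    rcases hAC with hA' | hC'
    · have h1 : 0 < 2*((k:ℝ)-t)*((t:ℝ)+(n:ℝ)-2*k)*A :=
        mul_pos (mul_pos (by linarith) hnt) hA'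
      have h3 : 0 ≤ ((k:ℝ)-t)*((k:ℝ)-1-t)*C := mul_nonneg (mul_nonneg hkt.le hk1t) hC
      linarith
    · have h1 : 0 ≤ 2*((k:ℝ)-t)*((t:ℝ)+(n:ℝ)-2*k)*A :=
        mul_nonneg (mul_nonneg (by linarith) hnt.le) hA
      have h3 : 0 < ((k:ℝ)-t)*((k:ℝ)-1-t)*C := mul_pos (mul_pos hkt hk1t') hC'
      linarith
  · have h1 : 0 ≤ 2*((k:ℝ)-t)*((t:ℝ)+(n:ℝ)-2*k)*A :=
      mul_nonneg (mul_nonneg (by linarith) hnt.le) hA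
    have h2 : 0 < 2*(t:ℝ)*((k:ℝ)-t)*B := mul_pos (mul_pos (by linarith) hkt) hB
    have h3 : 0 ≤ ((k:ℝ)-t)*((k:ℝ)-1-t)*C := mul_nonneg (mul_nonneg hkt.le hk1t) hC
    linarith
end

section
/- Let n, k be natural numbers with 1 < k < n/2 and let p ≥ 1 and −1/2 ≤ λ ≤ 0 be real numbers. For x ∈ {0,1}^n with exactly k coordinates equal to 1, define x* ∈ ℓ_p^{C(n,2)}, indexed by pairs 1 ≤ i < j ≤ n, by x*_{i,j} = x_i x_j + λ x_i + λ x_j. Then the map x ↦ x* is injective on the set of vectors in {0,1}^n with exactly k coordinates equal to 1. -/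
lemma star_aux
    (n k : ℕ) (lam : ℝ) (hk : 1 < k) (hkn : 2 * k < n)
    (hlam₁ : -(1/2) ≤ lam) (hlam₂ : lam ≤ 0)
    (x y : Fin n → ℝ)
    (hx01 : ∀ i, x i = 0 ∨ x i = 1) (hxk : {i | x i = 1}.ncard = k)
    (hy01 : ∀ i, y i = 0 ∨ y i = 1) (hyk : {i | y i = 1}.ncard = k)
    (hstar : ∀ i j : Fin n, i < j →
        x i * x j + lam * x i + lam * x j = y i * y j + lam * y i + lam * y j)
    (i : Fin n) (hxi : x i = 1) (hyi : y i = 0) : False := by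
  have hsym : ∀ i j : Fin n, i ≠ j →
      x i * x j + lam * x i + lam * x j = y i * y j + lam * y i + lam * y j := by
    intro a b hab
    rcases lt_or_gt_of_ne hab with h | h
    · exact hstar a b h
    · have := hstar b a h; linarith
  by_cases hhalf : lam = -(1/2)
  · -- find j with x j = 0 and y j = 0
    have hU : ({i | x i = 1} ∪ {i | y i = 1}).ncard < n := by
      calc ({i | x i = 1} ∪ {i | y i = 1}).ncard
          ≤ {i | x i = 1}.ncard + {i | y i = 1}.ncard := Set.ncard_union_le _ _
        _ = 2 * k := by rw [hxk, hyk]; ring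
        _ < n := hkn
    have hne : ({i | x i = 1} ∪ {i | y i = 1}) ≠ Set.univ := by
      intro h
      rw [h, Set.ncard_univ, Nat.card_eq_fintype_card, Fintype.card_fin] at hU
      exact lt_irrefl _ hU
    obtain ⟨j, hj⟩ : ∃ j, j ∉ ({i | x i = 1} ∪ {i | y i = 1}) := by
      by_contra h
      push_neg at h
      exact hne (Set.eq_univ_of_forall h)
    simp only [Set.mem_union, Set.mem_setOf_eq, not_or] at hj
    have hxj : x j = 0 := (hx01 j).resolve_right hj.1
    have hyj : y j = 0 := (hy01 j).resolve_right hj.2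
    have hij : i ≠ j := by
      intro h; rw [h, hxj] at hxi; norm_num at hxi
    have := hsym i j hij
    rw [hxi, hyi, hxj, hyj, hhalf] at this
    norm_num at this
  · -- find j ≠ i with x j = 1
    have h1 : 1 < ({i | x i = 1}).ncard := by rw [hxk]; exact hk
    obtain ⟨j, hj, hji⟩ := Set.exists_ne_of_one_lt_ncard h1 i
    have hxj : x j = 1 := hj
    have hij : i ≠ j := hji.symm
    have heq := hsym i j hij
    rw [hxi, hyi, hxj] at heq
    rcases hy01 j with hyj | hyj <;> rw [hyj] at heq
    · have : lam = -(1/2) := by linarith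
      exact hhalf this
    · linarith

/-- Let `1 < k < n/2`, `p ≥ 1`, `−1/2 ≤ λ ≤ 0`. For `x ∈ {0,1}^n` with exactly `k` unit
coordinates define `x* ∈ ℓ_p^{C(n,2)}`, indexed by pairs `i < j`, by
`x*_{i,j} = x_i x_j + λ x_i + λ x_j`. Then the map `x ↦ x*` is injective on the set of
vectors in `{0,1}^n` with exactly `k` unit coordinates. -/
theorem star_map_injective
    (n k : ℕ) (p lam : ℝ) (hk : 1 < k) (hkn : 2 * k < n)
    (hp : 1 ≤ p) (hlam₁ : -(1/2) ≤ lam) (hlam₂ : lam ≤ 0)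
    (x y : Fin n → ℝ)
    (hx01 : ∀ i, x i = 0 ∨ x i = 1) (hxk : {i | x i = 1}.ncard = k)
    (hy01 : ∀ i, y i = 0 ∨ y i = 1) (hyk : {i | y i = 1}.ncard = k)
    (hstar : (fun q : {q : Fin n × Fin n // q.1 < q.2} =>
        x q.1.1 * x q.1.2 + lam * x q.1.1 + lam * x q.1.2)
      = (fun q : {q : Fin n × Fin n // q.1 < q.2} =>
        y q.1.1 * y q.1.2 + lam * y q.1.1 + lam * y q.1.2)) :
    x = y := by
  have hstar' : ∀ i j : Fin n, i < j →
      x i * x j + lam * x i + lam * x j = y i * y j + lam * y i + lam * y j := by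
    intro i j hij
    exact congrFun hstar ⟨(i, j), hij⟩
  funext i
  by_contra hne
  rcases hx01 i with hxi | hxi <;> rcases hy01 i with hyi | hyi
  · exact hne (hxi.trans hyi.symm)
  · exact star_aux n k lam hk hkn hlam₁ hlam₂ y x hy01 hyk hx01 hxk
      (fun a b hab => (hstar' a b hab).symm) i hyi hxi
  · exact star_aux n k lam hk hkn hlam₁ hlam₂ x y hx01 hxk hy01 hyk hstar' i hxi hyi
  · exact hne (hxi.trans hyi.symm)
end

section
/- For every natural number d ≥ 1 and every bounded subset S of ℓ_∞^d containing at least two points, S can be partitioned into at most 2^d parts each of diameter strictly smaller than the diameter of S. -/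
/-- For every `d ≥ 1` and every bounded subset `S` of `ℓ_∞^d` containing at least two
points, `S` can be partitioned into at most `2^d` parts, each of diameter strictly smaller
than the diameter of `S` (i.e. `b(ℓ_∞^d) ≤ 2^d`). -/
theorem borsuk_linfty_upper
    (d : ℕ) (hd : 1 ≤ d) (S : Set (PiLp ⊤ (fun _ : Fin d => ℝ)))
    (hbdd : Bornology.IsBounded S) (hS : S.Nontrivial) :
    ∃ (m : ℕ) (P : Fin m → Set (PiLp ⊤ (fun _ : Fin d => ℝ))),
      m ≤ 2 ^ d ∧
      S = ⋃ i, P i ∧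
      (∀ i j, i ≠ j → Disjoint (P i) (P j)) ∧
      ∀ i, Metric.diam (P i) < Metric.diam S := by
  classical
  set D := Metric.diam S with hDdef
  obtain ⟨x0, hx0, y0, hy0, hxy0⟩ := hS
  have hne : Nonempty (Fin d) := ⟨⟨0, hd⟩⟩
  have hD : 0 < D := by
    have h1 : dist x0 y0 ≤ D := Metric.dist_le_diam_of_mem hbdd hx0 hy0
    have h2 : 0 < dist x0 y0 := dist_pos.mpr hxy0
    linarith
  -- coordinate bound
  have hcoord : ∀ x ∈ S, ∀ y ∈ S, ∀ k, dist (x k) (y k) ≤ D := by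
    intro x hx y hy k
    have h1 : dist (x k) (y k) ≤ dist x y := by
      rw [PiLp.dist_eq_iSup]
      exact le_ciSup (f := fun k => dist (x k) (y k))
        (Set.Finite.bddAbove (Set.finite_range _)) k
    exact h1.trans (Metric.dist_le_diam_of_mem hbdd hx hy)
  set a : Fin d → ℝ := fun k => sInf ((fun x => x k) '' S) with ha
  have hbdb : ∀ k, BddBelow ((fun x : PiLp ⊤ (fun _ : Fin d => ℝ) => x k) '' S) := by
    intro k
    refine ⟨x0 k - D, ?_⟩
    rintro _ ⟨y, hy, rfl⟩
    have := hcoord x0 hx0 y hy k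
    rw [Real.dist_eq] at this
    have := abs_le.mp this
    linarith [this.1]
  have hlb : ∀ x ∈ S, ∀ k, a k ≤ x k := fun x hx k =>
    csInf_le (hbdb k) ⟨x, hx, rfl⟩
  have hub : ∀ x ∈ S, ∀ k, x k ≤ a k + D := by
    intro x hx k
    have : x k - D ≤ a k := by
      apply le_csInf (Set.Nonempty.image _ ⟨x0, hx0⟩)
      rintro _ ⟨y, hy, rfl⟩
      have := hcoord x hx y hy k
      rw [Real.dist_eq] at this
      have := abs_le.mp this
      linarith [this.1]
    linarith
  -- the pieces
  set Q : (Fin d → Fin 2) → Set (PiLp ⊤ (fun _ : Fin d => ℝ)) :=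
    fun ε => {x ∈ S | ∀ k, (x k < a k + D / 2 ↔ ε k = 0)} with hQ
  refine ⟨2 ^ d, fun i => Q (finFunctionFinEquiv.symm i), le_rfl, ?_, ?_, ?_⟩
  · ext x
    simp only [Set.mem_iUnion]
    constructor
    · intro hx
      refine ⟨finFunctionFinEquiv (fun k => if x k < a k + D / 2 then 0 else 1), ?_⟩
      rw [Equiv.symm_apply_apply]
      refine ⟨hx, fun k => ?_⟩
      by_cases h : x k < a k + D / 2 <;> simp [h]
    · rintro ⟨i, hx, _⟩
      exact hx
  · intro i j hij
    rw [Set.disjoint_left]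
    rintro x ⟨hxS, hx1⟩ ⟨_, hx2⟩
    apply hij
    apply finFunctionFinEquiv.symm.injective
    funext k
    have h1 := hx1 k
    have h2 := hx2 k
    by_cases h : x k < a k + D / 2
    · rw [h1.mp h, h2.mp h]
    · have e1 := (not_iff_not.mpr h1).mp h
      have e2 := (not_iff_not.mpr h2).mp h
      rw [Fin.eq_one_of_ne_zero _ e1, Fin.eq_one_of_ne_zero _ e2]
  · intro i
    have : Metric.diam (Q (finFunctionFinEquiv.symm i)) ≤ D / 2 := by
      apply Metric.diam_le_of_forall_dist_le (by linarith)
      rintro x ⟨hxS, hx⟩ y ⟨hyS, hy⟩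
      rw [PiLp.dist_eq_iSup]
      apply ciSup_le
      intro k
      by_cases h : finFunctionFinEquiv.symm i k = 0
      · have hxk : x k < a k + D / 2 := (hx k).mpr h
        have hyk : y k < a k + D / 2 := (hy k).mpr h
        have := Real.dist_le_of_mem_Icc (x' := a k) (y' := a k + D / 2)
          ⟨hlb x hxS k, hxk.le⟩ ⟨hlb y hyS k, hyk.le⟩
        linarith
      · have hxk : ¬ x k < a k + D / 2 := fun hc => h ((hx k).mp hc)
        have hyk : ¬ y k < a k + D / 2 := fun hc => h ((hy k).mp hc)
        have := Real.dist_le_of_mem_Icc (x' := a k + D / 2) (y' := a k + D)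
          ⟨le_of_not_gt hxk, hub x hxS k⟩ ⟨le_of_not_gt hyk, hub y hyS k⟩
        linarith
    linarith
end

section
/- Let n, k be natural numbers with 1 < k < n/2, let p ≥ 1 and −1/2 ≤ λ ≤ 0 be real numbers, and for a real parameter μ ∈ [λ, 0] define a(μ) = −2|μ|^p − 2|1+μ|^p + |1+2μ|^p, b(μ) = 2(3k−n)|μ|^p + 2k|1+μ|^p + (1−2k)|1+2μ|^p, c(μ) = 2k(n−2k)|μ|^p + k(k−1)|1+2μ|^p. Set t₀ = −b(λ)/(2a(λ)). If t₁ is a positive integer with t₁ ≤ ⌊t₀ + 1/2⌋, then there exists μ ∈ [λ, 0] such that for every integer t with 0 ≤ t ≤ k, a(μ) t² + b(μ) t + c(μ) ≤ a(μ) t₁² + b(μ) t₁ + c(μ). -/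
/-!
Since `a < 0` on `[λ, 0]`, `t₁` maximises `t ↦ a t² + b t + c` over the integers as soon as the
vertex `-b/(2a)` equals `t₁ - 1/2`, i.e. `b + (2t₁ - 1) a = 0`. The floor hypothesis makes
`b + (2t₁ - 1) a` nonnegative at `μ = λ`, while at `μ = 0` it equals `2 - 2t₁ ≤ 0`; the
intermediate value theorem supplies the required `μ`.
-/

open Real Set

lemma abs_one_add_two_mul_rpow_lt {p μ : ℝ} (hp : 0 ≤ p) (h₁ : -(1/2) ≤ μ) (h₂ : μ ≤ 0) :
    |1 + 2*μ| ^ p < 2 * |μ| ^ p + 2 * |1 + μ| ^ p := by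
  have h_le : |1 + 2*μ| ^ p ≤ |1 + μ| ^ p := by
    refine rpow_le_rpow (abs_nonneg _) ?_ hp
    rw [abs_of_nonneg (by linarith), abs_of_nonneg (by linarith)]
    linarith
  have h_pos : 0 < |1 + μ| ^ p := rpow_pos_of_pos (abs_pos.2 (by linarith)) p
  have h_nonneg : 0 ≤ |μ| ^ p := by positivity
  linarith

lemma quadratic_le_of_vertex_eq_sub_half {a b c : ℝ} (s t : ℤ) (ha : a ≤ 0)
    (hvertex : b + (2 * s - 1) * a = 0) :
    a * t ^ 2 + b * t + c ≤ a * s ^ 2 + b * s + c := by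
  have h_factor : a * t ^ 2 + b * t + c =
      a * s ^ 2 + b * s + c + a * (((t - s : ℤ) : ℝ) * ((t - s : ℤ) + 1)) := by
    rw [show b = -(2 * s - 1) * a by linarith]
    push_cast
    ring
  have h_consecutive : (0 : ℝ) ≤ ((t - s : ℤ) : ℝ) * ((t - s : ℤ) + 1) := by
    have : (0 : ℤ) ≤ (t - s) * (t - s + 1) := by
      rcases le_or_gt 0 (t - s) with h | h <;> nlinarith
    exact_mod_cast this
  rw [h_factor]
  linarith [mul_nonpos_of_nonpos_of_nonneg ha h_consecutive]

lemma add_two_mul_sub_one_mul_nonneg_of_le_floor {a b : ℝ} {s : ℤ} (ha : a < 0)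
    (hs : s ≤ ⌊-b / (2 * a) + 1/2⌋) :
    0 ≤ b + (2 * s - 1) * a := by
  have h : (s : ℝ) - 1/2 ≤ -b / (2 * a) := by
    linarith [Int.le_floor.mp hs]
  rw [le_div_iff_of_neg (by linarith)] at h
  linarith

theorem exists_mu_integer_max_at_t1_general
    (n k : ℕ) (p lam : ℝ) (t₁ : ℕ)
    (hp : 1 ≤ p) (hlam₁ : -(1/2) ≤ lam) (hlam₂ : lam ≤ 0)
    (a b c : ℝ → ℝ)
    (ha : ∀ μ : ℝ, a μ = -2 * |μ| ^ p - 2 * |1 + μ| ^ p + |1 + 2*μ| ^ p)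
    (hb : ∀ μ : ℝ, b μ = 2 * (3 * (k : ℝ) - n) * |μ| ^ p + 2 * k * |1 + μ| ^ p
        + (1 - 2 * (k : ℝ)) * |1 + 2*μ| ^ p)
    (t₀ : ℝ) (ht₀ : t₀ = -(b lam) / (2 * a lam))
    (ht₁pos : 0 < t₁) (ht₁le : (t₁ : ℤ) ≤ ⌊t₀ + 1/2⌋) :
    ∃ μ : ℝ, lam ≤ μ ∧ μ ≤ 0 ∧
      ∀ t : ℤ, 0 ≤ t → t ≤ (k : ℤ) →
        a μ * (t : ℝ)^2 + b μ * (t : ℝ) + c μ ≤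
          a μ * (t₁ : ℝ)^2 + b μ * (t₁ : ℝ) + c μ := by
  have hp₀ : 0 < p := by linarith
  have ha_neg : ∀ μ, lam ≤ μ → μ ≤ 0 → a μ < 0 := fun μ h₁ h₂ => by
    rw [ha]
    linarith [abs_one_add_two_mul_rpow_lt hp₀.le (hlam₁.trans h₁) h₂]
  have h_cont : ContinuousOn (fun μ => b μ + (2 * (t₁ : ℤ) - 1) * a μ) (Icc lam 0) := by
    refine Continuous.continuousOn ?_
    simp only [ha, hb]
    fun_prop (disch := exact hp₀.le)
  have h_zero : b 0 + (2 * (t₁ : ℤ) - 1) * a 0 ≤ 0 := by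
    have : (1 : ℝ) ≤ t₁ := by exact_mod_cast ht₁pos
    simp only [ha, hb, abs_zero, zero_rpow hp₀.ne', mul_zero, add_zero, abs_one, one_rpow]
    push_cast
    linarith
  have h_lam : 0 ≤ b lam + (2 * (t₁ : ℤ) - 1) * a lam :=
    add_two_mul_sub_one_mul_nonneg_of_le_floor (ha_neg lam le_rfl hlam₂) (ht₀ ▸ ht₁le)
  obtain ⟨μ, ⟨hμ₁, hμ₂⟩, hvertex⟩ := intermediate_value_Icc' hlam₂ h_cont ⟨h_zero, h_lam⟩
  refine ⟨μ, hμ₁, hμ₂, fun t _ _ => ?_⟩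
  exact_mod_cast quadratic_le_of_vertex_eq_sub_half (t₁ : ℤ) t (ha_neg μ hμ₁ hμ₂).le hvertex

/-- Let `1 < k < n/2`, `p ≥ 1`, `−1/2 ≤ λ ≤ 0`, and for `μ ∈ [λ, 0]` define
`a(μ) = −2|μ|^p − 2|1+μ|^p + |1+2μ|^p`,
`b(μ) = 2(3k−n)|μ|^p + 2k|1+μ|^p + (1−2k)|1+2μ|^p`,
`c(μ) = 2k(n−2k)|μ|^p + k(k−1)|1+2μ|^p`, and set `t₀ = −b(λ)/(2a(λ))`.
If `t₁` is a positive integer with `t₁ ≤ ⌊t₀ + 1/2⌋`, then there exists `μ ∈ [λ, 0]` such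
that for every integer `t` with `0 ≤ t ≤ k`,
`a(μ) t² + b(μ) t + c(μ) ≤ a(μ) t₁² + b(μ) t₁ + c(μ)`. -/
theorem exists_mu_integer_max_at_t1
    (n k : ℕ) (p lam : ℝ) (t₁ : ℕ) (hk : 1 < k) (hkn : 2 * k < n)
    (hp : 1 ≤ p) (hlam₁ : -(1/2) ≤ lam) (hlam₂ : lam ≤ 0)
    (a b c : ℝ → ℝ)
    (ha : ∀ μ : ℝ, a μ = -2 * |μ| ^ p - 2 * |1 + μ| ^ p + |1 + 2*μ| ^ p)
    (hb : ∀ μ : ℝ, b μ = 2 * (3 * (k : ℝ) - n) * |μ| ^ p + 2 * k * |1 + μ| ^ p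
        + (1 - 2 * (k : ℝ)) * |1 + 2*μ| ^ p)
    (hc : ∀ μ : ℝ, c μ = 2 * k * ((n : ℝ) - 2 * k) * |μ| ^ p
        + k * ((k : ℝ) - 1) * |1 + 2*μ| ^ p)
    (t₀ : ℝ) (ht₀ : t₀ = -(b lam) / (2 * a lam))
    (ht₁pos : 0 < t₁) (ht₁le : (t₁ : ℤ) ≤ ⌊t₀ + 1/2⌋) :
    ∃ μ : ℝ, lam ≤ μ ∧ μ ≤ 0 ∧
      ∀ t : ℤ, 0 ≤ t → t ≤ (k : ℤ) →
        a μ * (t : ℝ)^2 + b μ * (t : ℝ) + c μ ≤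
          a μ * (t₁ : ℝ)^2 + b μ * (t₁ : ℝ) + c μ :=
  exists_mu_integer_max_at_t1_general n k p lam t₁ hp hlam₁ hlam₂ a b c ha hb t₀ ht₀ ht₁pos ht₁le
end
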